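/- Under the mixture Gaussian prior with 0 < σ₀ < σ₁ and λ ∈ (0,1), if |β| > 2σ₀·log(σ₁/(λσ₀)) and additionally 2σ₀·log(σ₁/(λσ₀)) ≥ (√2·σ₀σ₁/√(σ₁²−σ₀²))·√(log(((1−λ)/λ)(σ₁/σ₀))), then π(γ=1|β) > 1/2. -/

import Mathlib

/-- Conditional inclusion probability π(γ=1|β) under the mixture Gaussian prior
λ·N(0,σ₁²) + (1−λ)·N(0,σ₀²). -/
noncomputable def inclusionProb (lam σ₀ σ₁ β : ℝ) : ℝ :=
  (1 + ((1 - lam) * σ₁) / (lam * σ₀) *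
      Real.exp (-(1 / (2 * σ₀ ^ 2) - 1 / (2 * σ₁ ^ 2)) * β ^ 2))⁻¹

/-- if |β| exceeds 2σ₀·log(σ₁/(λσ₀)) which itself is at least the
half-probability threshold, then π(γ=1|β) > 1/2. -/
theorem inclusionProb_gt_half
    (lam σ₀ σ₁ β : ℝ) (hσ₀ : 0 < σ₀) (hσ : σ₀ < σ₁) (hlam0 : 0 < lam) (hlam1 : lam < 1)
    (hβ : |β| > 2 * σ₀ * Real.log (σ₁ / (lam * σ₀)))
    (hthresh : 2 * σ₀ * Real.log (σ₁ / (lam * σ₀)) ≥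
      Real.sqrt 2 * σ₀ * σ₁ / Real.sqrt (σ₁ ^ 2 - σ₀ ^ 2) *
        Real.sqrt (Real.log ((1 - lam) / lam * (σ₁ / σ₀)))) :
    inclusionProb lam σ₀ σ₁ β > 1 / 2 := by
  have hσ₁ : 0 < σ₁ := hσ₀.trans hσ
  have hlam' : 0 < 1 - lam := by linarith
  set a : ℝ := 1 / (2 * σ₀ ^ 2) - 1 / (2 * σ₁ ^ 2) with ha
  have ha0 : 0 < a := by
    have h1 : (0:ℝ) < 2 * σ₀ ^ 2 := by positivity
    have : 1 / (2 * σ₁ ^ 2) < 1 / (2 * σ₀ ^ 2) := by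
      apply one_div_lt_one_div_of_lt h1; nlinarith
    simp only [ha]; linarith
  set C : ℝ := (1 - lam) * σ₁ / (lam * σ₀) with hC
  have hC0 : 0 < C := by positivity
  have hCarg : (1 - lam) / lam * (σ₁ / σ₀) = C := by
    rw [hC, div_mul_div_comm]
  -- T > 0
  have hT0 : 0 < 2 * σ₀ * Real.log (σ₁ / (lam * σ₀)) := by
    have : 1 < σ₁ / (lam * σ₀) := by
      rw [lt_div_iff₀ (by positivity)]
      nlinarith
    have := Real.log_pos this
    positivity
  set T : ℝ := 2 * σ₀ * Real.log (σ₁ / (lam * σ₀)) with hT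
  -- β² > T²
  have hβ2 : T ^ 2 < β ^ 2 := by
    have := sq_abs β
    nlinarith [abs_nonneg β]
  set L : ℝ := Real.log C with hL
  have key : L < a * β ^ 2 := by
    rcases le_or_gt L 0 with h | h
    · nlinarith
    · have hd : (0:ℝ) < σ₁ ^ 2 - σ₀ ^ 2 := by nlinarith
      set K : ℝ := Real.sqrt 2 * σ₀ * σ₁ / Real.sqrt (σ₁ ^ 2 - σ₀ ^ 2) with hK
      have hK0 : 0 ≤ K := by positivity
      have hK2 : K ^ 2 = 2 * σ₀ ^ 2 * σ₁ ^ 2 / (σ₁ ^ 2 - σ₀ ^ 2) := by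
        rw [hK, div_pow, mul_pow, mul_pow, Real.sq_sqrt (by norm_num : (2:ℝ) ≥ 0),
          Real.sq_sqrt hd.le]
      have hsqL : Real.sqrt L ^ 2 = L := Real.sq_sqrt h.le
      have hth : K * Real.sqrt L ≤ T := by
        rw [hT]; rw [hCarg] at hthresh; exact hthresh
      have hT2 : K ^ 2 * L ≤ T ^ 2 := by
        have h1 : (K * Real.sqrt L) ^ 2 ≤ T ^ 2 := by
          apply sq_le_sq' _ hth
          nlinarith [Real.sqrt_nonneg L, mul_nonneg hK0 (Real.sqrt_nonneg L)]
        calc K ^ 2 * L = (K * Real.sqrt L) ^ 2 := by rw [mul_pow, hsqL]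
          _ ≤ T ^ 2 := h1
      have haK : a * K ^ 2 = 1 := by
        rw [hK2, ha]
        field_simp
      have : a * (K ^ 2 * L) ≤ a * T ^ 2 := by
        apply mul_le_mul_of_nonneg_left hT2 ha0.le
      calc L = a * (K ^ 2 * L) := by rw [← mul_assoc, haK, one_mul]
        _ ≤ a * T ^ 2 := this
        _ < a * β ^ 2 := by exact mul_lt_mul_of_pos_left hβ2 ha0
  -- conclude
  have hx : C * Real.exp (-a * β ^ 2) < 1 := by
    have : Real.exp L * Real.exp (-a * β ^ 2) < 1 := by
      rw [← Real.exp_add]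
      calc Real.exp (L + -a * β ^ 2) < Real.exp 0 := by
            apply Real.exp_lt_exp.2; linarith
        _ = 1 := Real.exp_zero
    rwa [hL, Real.exp_log hC0] at this
  have hxnn : 0 ≤ C * Real.exp (-a * β ^ 2) := by positivity
  rw [inclusionProb]
  rw [gt_iff_lt, div_lt_iff₀ (by norm_num : (0:ℝ) < 2)]
  rw [inv_mul_eq_div, lt_div_iff₀ (by positivity)]
  nlinarith
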